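/- In the six-symbol bosonic Weyl system realizing the fields β(z), β*(z), ε_1(z), ε_1*(z), ε_2(z), ε_2*(z), with α_0(m) := −½[(:ee*:)(m) + (:eβ*:)(m) + (:βe*:)(m) + (:ββ*:)(m)], the Heisenberg relation at level −1 for the affine root α_0 (of square norm (α_0,α_0) = 4) holds in mode form: for all m, n ∈ ℤ, α_0(m)α_0(n) − α_0(n)α_0(m) = −4m·δ_{m+n,0}·id. (This is the mode form of the relation [α_0(z), α_0(w)] = −4∂_wδ(z−w) = (α_0,α_0)∂_wδ(z−w)·(−1) verified in the proof of Theorem 3.5.) -/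

import Mathlib

noncomputable section

/-- A *bosonic Weyl system* over a set `S` of symbols with pairing `pair : S → S → ℂ`
on a complex vector space `W`: a family of operators `op u k` (`u ∈ S`, `k ∈ ℤ`)
such that `[op u k, op v l] = ⟨u,v⟩ δ_{k+l,0} id`. -/
def IsBosonicWeylSystem {S W : Type*} [AddCommGroup W] [Module ℂ W]
    (pair : S → S → ℂ) (op : S → ℤ → Module.End ℂ W) : Prop :=
  ∀ u v : S, ∀ k l : ℤ,
    op u k * op v l - op v l * op u k =
      if k + l = 0 then pair u v • (1 : Module.End ℂ W) else 0

/-- A family of operators is *locally annihilating* if for every vector `w` and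
every symbol `u`, `op u k w = 0` for all sufficiently large `k`. -/
def LocallyAnnihilating {S W : Type*} [AddCommGroup W] [Module ℂ W]
    (op : S → ℤ → Module.End ℂ W) : Prop :=
  ∀ (w : W) (u : S), ∃ K : ℤ, ∀ k : ℤ, K ≤ k → op u k w = 0

/-- The normally ordered quadratic mode
`(:uv:)(m) = Σ_{j<0} u(j)v(m-j) + Σ_{j≥0} v(m-j)u(j)` applied to a vector `w`;
on a locally annihilating system all but finitely many summands vanish, so the
`finsum` computes the intended (finite) sum. -/
def noMode {S W : Type*} [AddCommGroup W] [Module ℂ W]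
    (op : S → ℤ → Module.End ℂ W) (u v : S) (m : ℤ) (w : W) : W :=
  ∑ᶠ j : ℤ, if j < 0 then op u j (op v (m - j) w) else op v (m - j) (op u j w)

end

/-- The six symbols `β, β*, ε₁, ε₁*, ε₂, ε₂*`: the symbol `(i, false)` is the plain
symbol (`0 = β`, `1 = ε₁ = e`, `2 = ε₂ = f`) and `(i, true)` the starred one. -/
abbrev WSym6 : Type := Fin 3 × Bool

/-- The Gram values `g(β,β) = g(β,e) = g(e,β) = g(e,e) = g(f,f) = 1`, `g(β,f) = g(e,f) = 0`. -/
noncomputable def gram6 : Fin 3 → Fin 3 → ℂ := !![1, 1, 0; 1, 1, 0; 0, 0, 1]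

/-- The pairing `⟨u, v*⟩ = -g(u,v)`, `⟨u*, v⟩ = g(u,v)`, `⟨u,v⟩ = ⟨u*,v*⟩ = 0`. -/
noncomputable def pair6 : WSym6 → WSym6 → ℂ
  | (i, false), (j, true) => -gram6 i j
  | (i, true), (j, false) => gram6 i j
  | _, _ => 0

section
variable {W : Type*} [AddCommGroup W] [Module ℂ W] (op : WSym6 → ℤ → Module.End ℂ W)

/-- `x₀⁺(m) = ½ (:β*e*:)(m)` (applied to a vector). -/
noncomputable def xZeroPlus (m : ℤ) (w : W) : W :=
  (1 / 2 : ℂ) • noMode op (0, true) (1, true) m w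

/-- `x₀⁻(m) = ½ (:βe:)(m)` (applied to a vector). -/
noncomputable def xZeroMinus (m : ℤ) (w : W) : W :=
  (1 / 2 : ℂ) • noMode op (0, false) (1, false) m w

/-- `x₁⁺(m) = √-1 (:ef*:)(m)` (applied to a vector). -/
noncomputable def xOnePlus (m : ℤ) (w : W) : W :=
  Complex.I • noMode op (1, false) (2, true) m w

/-- `α₀(m) = -½[(:ee*:)(m) + (:eβ*:)(m) + (:βe*:)(m) + (:ββ*:)(m)]` (applied to a vector). -/
noncomputable def alZero (m : ℤ) (w : W) : W :=
  (-(1 / 2) : ℂ) • (noMode op (1, false) (1, true) m w + noMode op (1, false) (0, true) m w +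
    noMode op (0, false) (1, true) m w + noMode op (0, false) (0, true) m w)

end

/-- The commutator `[A, B] = AB - BA` of two (pointwise-defined) operators. -/
def brkt {W : Type*} [AddCommGroup W] (A B : W → W) : W → W := fun w => A (B w) - B (A w)

/-!
With `A = ε₁ + β` and `B = ε₁* + β*`, bilinearity of normal ordering gives `α₀ = -½ :AB:`, and
`[A(k), B(l)] = -4 δ_{k+l,0}` while the `A(k)`, resp. the `B(k)`, commute among themselves.
For any such pair with `[A(k), B(l)] = c δ_{k+l,0}`, the mode `:AB:(m)` acts on single modes by
`[:AB:(m), A(k)] = -c A(m+k)` and `[:AB:(m), B(k)] = c B(m+k)`. By the Leibniz rule,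
`[:AB:(m), :AB:(n)] w` is then the shifted sum `c Σ_j (f j - f (j + m))` with
`f j = A(j) B(m+n-j) w`; as `f` vanishes near `-∞` and equals `c δ_{m+n,0} w` near `+∞`, this
telescopes to `-c² m δ_{m+n,0} w`. For `c = -4` and the prefactor `¼` this is `-4m δ_{m+n,0} w`.
-/

open Filter Finset

theorem Finset.sum_Ico_eq_sum_Ico_add_zsmul {M : Type*} [AddCommGroup M] {f : ℤ → M} {C : M}
    {a b L U : ℤ} (h_lt : ∀ j < L, f j = 0) (h_ge : ∀ j, U ≤ j → f j = C)
    (haL : a ≤ L) (hLU : L ≤ U) (hUb : U ≤ b) :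
    ∑ j ∈ Ico a b, f j = ∑ j ∈ Ico L U, f j + (b - U) • C := by
  rw [← Ico_union_Ico_eq_Ico haL (hLU.trans hUb), sum_union (Ico_disjoint_Ico_consecutive _ _ _),
    ← Ico_union_Ico_eq_Ico hLU hUb, sum_union (Ico_disjoint_Ico_consecutive _ _ _),
    sum_eq_zero fun j hj => h_lt j (mem_Ico.1 hj).2, zero_add,
    sum_congr rfl fun j hj => h_ge j (mem_Ico.1 hj).1, sum_const, Int.card_Ico,
    ← natCast_zsmul, Int.toNat_of_nonneg (sub_nonneg.2 hUb)]

theorem eventually_sum_Ico_sub_comp_add_eq {M : Type*} [AddCommGroup M] {f : ℤ → M} {C : M}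
    (h_bot : ∀ᶠ j in atBot, f j = 0) (h_top : ∀ᶠ j in atTop, f j = C) (m : ℤ) :
    ∀ᶠ N in atTop, ∑ j ∈ Ico (-N) N, (f j - f (j + m)) = -(m • C) := by
  obtain ⟨L, hL⟩ := eventually_atBot.1 h_bot
  obtain ⟨U, hU⟩ := eventually_atTop.1 h_top
  have h_lt : ∀ j < min L U, f j = 0 := fun j hj => hL j (hj.le.trans (min_le_left L U))
  filter_upwards [eventually_ge_atTop (|L| + |U| + |m|)] with N hN
  have := neg_abs_le L; have := le_abs_self U; have := neg_abs_le U
  have := le_abs_self m; have := neg_abs_le m; have := abs_nonneg L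
  rw [sum_sub_distrib, sum_Ico_add' f, sum_Ico_eq_sum_Ico_add_zsmul h_lt hU
      (le_min (by omega) (by omega)) (min_le_right L U) (by omega : U ≤ N),
    sum_Ico_eq_sum_Ico_add_zsmul h_lt hU (le_min (by omega) (by omega) : -N + m ≤ _)
      (min_le_right L U) (by omega : U ≤ N + m)]
  module

section NormalOrder

variable {W : Type*} [AddCommGroup W] [Module ℂ W]

def IsLocallyAnnihilating (A : ℤ → Module.End ℂ W) : Prop :=
  ∀ w, ∀ᶠ k in atTop, A k w = 0

theorem IsLocallyAnnihilating.add {A A' : ℤ → Module.End ℂ W} (hA : IsLocallyAnnihilating A)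
    (hA' : IsLocallyAnnihilating A') : IsLocallyAnnihilating (A + A') := fun w =>
  ((hA w).and (hA' w)).mono fun k hk => by simp [hk.1, hk.2]

theorem LocallyAnnihilating.isLocallyAnnihilating {S : Type*} {op : S → ℤ → Module.End ℂ W}
    (h : LocallyAnnihilating op) (u : S) : IsLocallyAnnihilating (op u) := fun w =>
  eventually_atTop.2 (h w u)

variable (A A' B B' : ℤ → Module.End ℂ W)

def normalOrderTerm (m j : ℤ) : Module.End ℂ W :=
  if j < 0 then A j * B (m - j) else B (m - j) * A j

noncomputable def normalOrder (m : ℤ) (w : W) : W :=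
  ∑ᶠ j, normalOrderTerm A B m j w

theorem noMode_eq_normalOrder {S : Type*} (op : S → ℤ → Module.End ℂ W) (u v : S) :
    noMode op u v = normalOrder (op u) (op v) := by
  ext m w
  simp only [noMode, normalOrder, normalOrderTerm]
  congr! 2 with j
  split_ifs <;> rfl

theorem normalOrderTerm_add_left (m j : ℤ) :
    normalOrderTerm (A + A') B m j = normalOrderTerm A B m j + normalOrderTerm A' B m j := by
  unfold normalOrderTerm
  split_ifs <;> simp only [Pi.add_apply, add_mul, mul_add]

theorem normalOrderTerm_add_right (m j : ℤ) :
    normalOrderTerm A (B + B') m j = normalOrderTerm A B m j + normalOrderTerm A B' m j := by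
  unfold normalOrderTerm
  split_ifs <;> simp only [Pi.add_apply, add_mul, mul_add]

variable {A A' B B'}

theorem normalOrder_eventually_eq_sum (hA : IsLocallyAnnihilating A)
    (hB : IsLocallyAnnihilating B) (m : ℤ) (w : W) :
    ∀ᶠ N in atTop, normalOrder A B m w = ∑ j ∈ Ico (-N) N, normalOrderTerm A B m j w := by
  obtain ⟨KA, hKA⟩ := eventually_atTop.1 (hA w)
  obtain ⟨KB, hKB⟩ := eventually_atTop.1 (hB w)
  filter_upwards [eventually_ge_atTop (max (max KA (KB - m)) 0)] with N hN
  simp only [max_le_iff] at hN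
  refine finsum_eq_sum_of_support_subset _ fun j hj => ?_
  rw [Function.mem_support] at hj
  rw [coe_Ico, Set.mem_Ico]
  by_contra hjN
  refine hj ?_
  unfold normalOrderTerm
  split_ifs with hj0
  · rw [Module.End.mul_apply, hKB (m - j) (by omega), map_zero]
  · rw [Module.End.mul_apply, hKA j (by omega), map_zero]

theorem isLinearMap_normalOrder (hA : IsLocallyAnnihilating A) (hB : IsLocallyAnnihilating B)
    (m : ℤ) : IsLinearMap ℂ (normalOrder A B m) where
  map_add v v' := by
    obtain ⟨N, h, hv, hv'⟩ := ((normalOrder_eventually_eq_sum hA hB m (v + v')).and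
      ((normalOrder_eventually_eq_sum hA hB m v).and
        (normalOrder_eventually_eq_sum hA hB m v'))).exists
    simp only [h, hv, hv', map_add, sum_add_distrib]
  map_smul r v := by
    obtain ⟨N, h, hv⟩ := ((normalOrder_eventually_eq_sum hA hB m (r • v)).and
      (normalOrder_eventually_eq_sum hA hB m v)).exists
    simp only [h, hv, map_smul, smul_sum]

theorem normalOrder_add_left (hA : IsLocallyAnnihilating A) (hA' : IsLocallyAnnihilating A')
    (hB : IsLocallyAnnihilating B) (m : ℤ) (w : W) :
    normalOrder (A + A') B m w = normalOrder A B m w + normalOrder A' B m w := by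
  obtain ⟨N, h, h₁, h₂⟩ := ((normalOrder_eventually_eq_sum (hA.add hA') hB m w).and
    ((normalOrder_eventually_eq_sum hA hB m w).and
      (normalOrder_eventually_eq_sum hA' hB m w))).exists
  simp only [h, h₁, h₂, normalOrderTerm_add_left, LinearMap.add_apply, sum_add_distrib]

theorem normalOrder_add_right (hA : IsLocallyAnnihilating A) (hB : IsLocallyAnnihilating B)
    (hB' : IsLocallyAnnihilating B') (m : ℤ) (w : W) :
    normalOrder A (B + B') m w = normalOrder A B m w + normalOrder A B' m w := by
  obtain ⟨N, h, h₁, h₂⟩ := ((normalOrder_eventually_eq_sum hA (hB.add hB') m w).and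
    ((normalOrder_eventually_eq_sum hA hB m w).and
      (normalOrder_eventually_eq_sum hA hB' m w))).exists
  simp only [h, h₁, h₂, normalOrderTerm_add_right, LinearMap.add_apply, sum_add_distrib]

end NormalOrder

theorem Ring.mul_lie {R : Type*} [Ring R] (x y z : R) :
    ⁅x * y, z⁆ = x * ⁅y, z⁆ + ⁅x, z⁆ * y := by
  simp only [Ring.lie_def]
  noncomm_ring

section WeylPair

variable {W : Type*} [AddCommGroup W] [Module ℂ W] {A B : ℤ → Module.End ℂ W} {c : ℂ}

structure IsWeylPair (A B : ℤ → Module.End ℂ W) (c : ℂ) : Prop where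
  lie_left_right : ∀ k l, ⁅A k, B l⁆ = if k + l = 0 then c • 1 else 0
  lie_left : ∀ k l, ⁅A k, A l⁆ = 0
  lie_right : ∀ k l, ⁅B k, B l⁆ = 0

namespace IsWeylPair

theorem exists_normalOrderTerm_eq (h : IsWeylPair A B c) (n j : ℤ) :
    ∃ s : ℂ, normalOrderTerm A B n j = A j * B (n - j) - s • 1 := by
  unfold normalOrderTerm
  split_ifs
  · exact ⟨0, by simp⟩
  · refine ⟨if j + (n - j) = 0 then c else 0, ?_⟩
    rw [ite_smul, zero_smul, ← h.lie_left_right, Ring.lie_def, sub_sub_cancel]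

theorem lie_normalOrderTerm_left (h : IsWeylPair A B c) (m j k : ℤ) :
    ⁅normalOrderTerm A B m j, A k⁆ = if j = m + k then -c • A j else 0 := by
  have hjk : (k + (m - j) = 0) = (j = m + k) := propext (by omega)
  have hBA : ⁅B (m - j), A k⁆ = -⁅A k, B (m - j)⁆ := by simp only [Ring.lie_def, neg_sub]
  unfold normalOrderTerm
  split_ifs <;>
    simp only [Ring.mul_lie, h.lie_left, hBA, h.lie_left_right, hjk] <;>
    split_ifs <;> simp

theorem lie_normalOrderTerm_right (h : IsWeylPair A B c) (m j k : ℤ) :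
    ⁅normalOrderTerm A B m j, B k⁆ = if j = -k then c • B (m + k) else 0 := by
  have hjk : (j + k = 0) = (j = -k) := propext (by omega)
  unfold normalOrderTerm
  split_ifs <;>
    simp only [Ring.mul_lie, h.lie_right, h.lie_left_right, hjk] <;>
    split_ifs <;> simp_all [sub_neg_eq_add]

theorem normalOrder_commutator_left (h : IsWeylPair A B c) (hA : IsLocallyAnnihilating A)
    (hB : IsLocallyAnnihilating B) (m k : ℤ) (v : W) :
    normalOrder A B m (A k v) - A k (normalOrder A B m v) = -c • A (m + k) v := by
  obtain ⟨N, h₁, h₂, hN⟩ := ((normalOrder_eventually_eq_sum hA hB m (A k v)).and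
    ((normalOrder_eventually_eq_sum hA hB m v).and (eventually_gt_atTop |m + k|))).exists
  have hterm (j : ℤ) : normalOrderTerm A B m j (A k v) - A k (normalOrderTerm A B m j v) =
      if j = m + k then -c • A (m + k) v else 0 := by
    have := LinearMap.congr_fun (h.lie_normalOrderTerm_left m j k) v
    split_ifs at this ⊢ with hj <;> subst_vars <;> simpa [Ring.lie_def] using this
  have hmem : m + k ∈ Ico (-N) N := by
    rw [mem_Ico]; constructor <;> linarith [neg_abs_le (m + k), le_abs_self (m + k)]
  rw [h₁, h₂, map_sum, ← sum_sub_distrib, sum_congr rfl fun j _ => hterm j, sum_ite_eq',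
    if_pos hmem]

theorem normalOrder_commutator_right (h : IsWeylPair A B c) (hA : IsLocallyAnnihilating A)
    (hB : IsLocallyAnnihilating B) (m k : ℤ) (v : W) :
    normalOrder A B m (B k v) - B k (normalOrder A B m v) = c • B (m + k) v := by
  obtain ⟨N, h₁, h₂, hN⟩ := ((normalOrder_eventually_eq_sum hA hB m (B k v)).and
    ((normalOrder_eventually_eq_sum hA hB m v).and (eventually_gt_atTop |k|))).exists
  have hterm (j : ℤ) : normalOrderTerm A B m j (B k v) - B k (normalOrderTerm A B m j v) =
      if j = -k then c • B (m + k) v else 0 := by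
    have := LinearMap.congr_fun (h.lie_normalOrderTerm_right m j k) v
    split_ifs at this ⊢ with hj <;> simpa [Ring.lie_def] using this
  have hmem : -k ∈ Ico (-N) N := by
    rw [mem_Ico]; constructor <;> linarith [neg_abs_le k, le_abs_self k]
  rw [h₁, h₂, map_sum, ← sum_sub_distrib, sum_congr rfl fun j _ => hterm j, sum_ite_eq',
    if_pos hmem]

theorem normalOrder_commutator (h : IsWeylPair A B c) (hA : IsLocallyAnnihilating A)
    (hB : IsLocallyAnnihilating B) (m n : ℤ) (w : W) :
    normalOrder A B m (normalOrder A B n w) - normalOrder A B n (normalOrder A B m w) =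
      if m + n = 0 then (-(c ^ 2 * m)) • w else 0 := by
  have hX : IsLinearMap ℂ (normalOrder A B m) := isLinearMap_normalOrder hA hB m
  set f : ℤ → W := fun j => A j (B (m + n - j) w)
  have hf_bot : ∀ᶠ j in atBot, f j = 0 := by
    obtain ⟨K, hK⟩ := eventually_atTop.1 (hB w)
    exact eventually_atBot.2 ⟨m + n - K, fun j hj => by simp [f, hK (m + n - j) (by omega)]⟩
  have hf_top : ∀ᶠ j in atTop, f j = if m + n = 0 then c • w else 0 := by
    filter_upwards [hA w] with j hj
    have := LinearMap.congr_fun (h.lie_left_right j (m + n - j)) w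
    rw [add_sub_cancel] at this
    split_ifs at this ⊢ <;> simpa [f, Ring.lie_def, hj] using this
  have hterm (j : ℤ) : normalOrder A B m (normalOrderTerm A B n j w) -
      normalOrderTerm A B n j (normalOrder A B m w) = c • (f j - f (j + m)) := by
    obtain ⟨s, hs⟩ := h.exists_normalOrderTerm_eq n j
    have hXA := sub_eq_iff_eq_add'.1 (h.normalOrder_commutator_left hA hB m j (B (n - j) w))
    have hXB := sub_eq_iff_eq_add'.1 (h.normalOrder_commutator_right hA hB m (n - j) w)
    simp only [hs, LinearMap.sub_apply, Module.End.mul_apply, LinearMap.smul_apply,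
      Module.End.one_apply, hX.map_sub, hX.map_smul, f]
    rw [hXA, hXB, map_add, map_smul, show m + n - (j + m) = n - j by ring,
      show m + (n - j) = m + n - j by ring, add_comm m j]
    module
  have hsum (s : Finset ℤ) : normalOrder A B m (∑ j ∈ s, normalOrderTerm A B n j w) =
      ∑ j ∈ s, normalOrder A B m (normalOrderTerm A B n j w) := map_sum (hX.mk' _) _ s
  obtain ⟨N, h₁, h₂, h₃⟩ := ((normalOrder_eventually_eq_sum hA hB n w).and
    ((normalOrder_eventually_eq_sum hA hB n (normalOrder A B m w)).and
      (eventually_sum_Ico_sub_comp_add_eq hf_bot hf_top m))).exists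
  rw [h₁, h₂, hsum, ← sum_sub_distrib, sum_congr rfl fun j _ => hterm j, ← smul_sum, h₃]
  split_ifs
  · module
  · simp

end IsWeylPair

end WeylPair

theorem IsBosonicWeylSystem.lie_add_add {S W : Type*} [AddCommGroup W] [Module ℂ W]
    {pair : S → S → ℂ} {op : S → ℤ → Module.End ℂ W} (hW : IsBosonicWeylSystem pair op)
    (a a' b b' : S) (k l : ℤ) :
    ⁅op a k + op a' k, op b l + op b' l⁆ =
      if k + l = 0 then (pair a b + pair a b' + pair a' b + pair a' b') • 1 else 0 := by
  have hexpand : ⁅op a k + op a' k, op b l + op b' l⁆ =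
      ⁅op a k, op b l⁆ + ⁅op a k, op b' l⁆ + ⁅op a' k, op b l⁆ + ⁅op a' k, op b' l⁆ := by
    simp only [Ring.lie_def]
    noncomm_ring
  rw [hexpand]
  simp only [Ring.lie_def]
  rw [hW a b, hW a b', hW a' b, hW a' b']
  split_ifs
  · simp only [add_smul]
  · simp

/-- in the six-symbol bosonic Weyl system, the Heisenberg relation at
level `-1` for the affine root `α₀` (of square norm `4`) holds in mode form:
`[α₀(m), α₀(n)] = -4m δ_{m+n,0} id`. -/
theorem alZero_heisenberg {W : Type*} [AddCommGroup W] [Module ℂ W]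
    (op : WSym6 → ℤ → Module.End ℂ W)
    (hW : IsBosonicWeylSystem pair6 op) (hA : LocallyAnnihilating op)
    (m n : ℤ) (w : W) :
    alZero op m (alZero op n w) - alZero op n (alZero op m w) =
      if m + n = 0 then (-4 * (m : ℂ)) • w else 0 := by
  set A : ℤ → Module.End ℂ W := op (1, false) + op (0, false) with hA_def
  set B : ℤ → Module.End ℂ W := op (1, true) + op (0, true) with hB_def
  have hloc := hA.isLocallyAnnihilating
  have hAloc : IsLocallyAnnihilating A := (hloc _).add (hloc _)
  have hBloc : IsLocallyAnnihilating B := (hloc _).add (hloc _)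
  have hpair : IsWeylPair A B (-4) := by
    refine ⟨fun k l => ?_, fun k l => ?_, fun k l => ?_⟩ <;>
      simp only [hA_def, hB_def, Pi.add_apply, hW.lie_add_add] <;> norm_num [pair6, gram6]
  have hα (r : ℤ) (v : W) : alZero op r v = (-(1 / 2) : ℂ) • normalOrder A B r v := by
    rw [alZero, normalOrder_add_left (hloc _) (hloc _) hBloc,
      normalOrder_add_right (hloc _) (hloc _) (hloc _),
      normalOrder_add_right (hloc _) (hloc _) (hloc _)]
    simp only [noMode_eq_normalOrder, add_assoc]
  have hlin := isLinearMap_normalOrder hAloc hBloc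
  simp only [hα, (hlin _).map_smul, smul_smul, ← smul_sub,
    hpair.normalOrder_commutator hAloc hBloc]
  split_ifs
  · module
  · simp
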